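/- arXiv:math/0306004 — 2 statements merged into one kernel-verified Lean document; each statement's English description precedes it below -/
import Mathlib

section
/- The trace of Ric(a,c)·g(a,c)^{-1} equals 4n(1 + n - 1/(2c)) + 4p(1 + p - (a²+c²)/(2c)), where Ric(a,c) and g(a,c) are the explicit (2n+2p+2)×(2n+2p+2) matrices of the Ricci curvature and metric given below. -/
open Matrix

/-- The metric matrix `g(a,c)` on the basis `X¹, Y¹₁,…,Y¹₂ₙ, X², Y²₁,…,Y²₂ₚ`. -/
noncomputable def gMat (n p : ℕ) (a c : ℝ) : Matrix (Fin (2*n+2*p+2)) (Fin (2*n+2*p+2)) ℝ :=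
  Matrix.of fun i j =>
    if (i : ℕ) = j then
      (if (i : ℕ) = 0 then 1/c else if (i : ℕ) = 2*n+1 then (a^2+c^2)/c else 1)
    else if ((i : ℕ) = 0 ∧ (j : ℕ) = 2*n+1) ∨ ((i : ℕ) = 2*n+1 ∧ (j : ℕ) = 0) then
      -a/c
    else 0

/-- The Ricci curvature matrix `Ric(a,c)` in the same basis. -/
noncomputable def ricMat (n p : ℕ) (a c : ℝ) : Matrix (Fin (2*n+2*p+2)) (Fin (2*n+2*p+2)) ℝ :=
  Matrix.of fun i j =>
    if (i : ℕ) = j then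
      (if (i : ℕ) = 0 then 2 * (n + p * a^2) / c^2
       else if (i : ℕ) = 2*n+1 then 2 * (n * a^2 + p * (a^2+c^2)^2) / c^2
       else if (i : ℕ) ≤ 2*n then 2 * (1 + n - 1/c)
       else 2 * (1 + p - (a^2+c^2)/c))
    else if ((i : ℕ) = 0 ∧ (j : ℕ) = 2*n+1) ∨ ((i : ℕ) = 2*n+1 ∧ (j : ℕ) = 0) then
      -2 * a * (n + p * (a^2+c^2)) / c^2
    else 0

noncomputable def gInvMat (n p : ℕ) (a c : ℝ) : Matrix (Fin (2*n+2*p+2)) (Fin (2*n+2*p+2)) ℝ :=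
  Matrix.of fun i j =>
    if (i : ℕ) = j then
      (if (i : ℕ) = 0 then (a^2+c^2)/c else if (i : ℕ) = 2*n+1 then 1/c else 1)
    else if ((i : ℕ) = 0 ∧ (j : ℕ) = 2*n+1) ∨ ((i : ℕ) = 2*n+1 ∧ (j : ℕ) = 0) then
      a/c
    else 0

section
variable (n p : ℕ) (a c : ℝ)

abbrev zIdx : Fin (2*n+2*p+2) := ⟨0, by omega⟩
abbrev mIdx : Fin (2*n+2*p+2) := ⟨2*n+1, by omega⟩

lemma gMat_decomp (i k : Fin (2*n+2*p+2)) :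
    gMat n p a c i k =
      (if k = i then (if (i : ℕ) = 0 then 1/c else if (i : ℕ) = 2*n+1 then (a^2+c^2)/c else 1) else 0)
      + (if (i : ℕ) = 0 then if k = mIdx n p then -a/c else 0 else 0)
      + (if (i : ℕ) = 2*n+1 then if k = zIdx n p then -a/c else 0 else 0) := by
  simp only [gMat, of_apply, Fin.ext_iff, zIdx, mIdx]
  split_ifs <;> first | omega | ring

lemma mul_gInv (hc : c ≠ 0) : gMat n p a c * gInvMat n p a c = 1 := by
  ext i j
  rw [Matrix.mul_apply]
  simp only [gMat_decomp, add_mul, ite_mul, zero_mul, Finset.sum_add_distrib,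
    Finset.sum_ite_irrel, Finset.sum_ite_eq, Finset.sum_ite_eq', Finset.mem_univ, if_true,
    Finset.sum_const_zero]
  simp only [gInvMat, of_apply, Matrix.one_apply, Fin.ext_iff, zIdx, mIdx]
  split_ifs <;>
    (try simp_all only [true_and, false_and, and_true, and_false, or_false, false_or,
      not_true_eq_false, not_false_eq_true]) <;>
    first | omega | (field_simp; try ring)

end

section
variable (n p : ℕ) (a c : ℝ)

noncomputable def rdN : ℕ → ℝ := fun t =>
  if t = 0 then 2 * (n + p * a^2) / c^2
  else if t = 2*n+1 then 2 * (n * a^2 + p * (a^2+c^2)^2) / c^2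
  else if t ≤ 2*n then 2 * (1 + n - 1/c)
  else 2 * (1 + p - (a^2+c^2)/c)

noncomputable def gdN : ℕ → ℝ := fun t =>
  if t = 0 then (a^2+c^2)/c else if t = 2*n+1 then 1/c else 1

lemma ric_decomp (i k : Fin (2*n+2*p+2)) :
    ricMat n p a c i k =
      (if k = i then rdN n p a c (i : ℕ) else 0)
      + (if (i : ℕ) = 0 then if k = mIdx n p then -2 * a * (n + p * (a^2+c^2)) / c^2 else 0 else 0)
      + (if (i : ℕ) = 2*n+1 then if k = zIdx n p then -2 * a * (n + p * (a^2+c^2)) / c^2 else 0 else 0) := by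
  simp only [ricMat, of_apply, Fin.ext_iff, zIdx, mIdx, rdN]
  split_ifs <;>
    (try simp_all only [true_and, false_and, and_true, and_false, or_false, false_or,
      not_true_eq_false, not_false_eq_true]) <;>
    first | omega | (field_simp; try ring)

lemma gInv_diag (i : Fin (2*n+2*p+2)) : gInvMat n p a c i i = gdN n a c (i : ℕ) := by
  simp [gInvMat, gdN]

lemma gInv_mz : gInvMat n p a c (mIdx n p) (zIdx n p) = a/c := by
  simp [gInvMat, zIdx, mIdx]

lemma gInv_zm : gInvMat n p a c (zIdx n p) (mIdx n p) = a/c := by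
  simp [gInvMat, zIdx, mIdx]

lemma coe_eq_zero (i : Fin (2*n+2*p+2)) : ((i : ℕ) = 0) = (i = zIdx n p) := by
  exact (propext (Fin.ext_iff (a := i) (b := zIdx n p))).symm

lemma coe_eq_m (i : Fin (2*n+2*p+2)) : ((i : ℕ) = 2*n+1) = (i = mIdx n p) := by
  simp [Fin.ext_iff, mIdx]

lemma sum_diag : ∑ t ∈ Finset.range (2*n+2*p+2), rdN n p a c t * gdN n a c t
    = 2 * (n + p * a^2) / c^2 * ((a^2+c^2)/c)
      + 2 * (n * a^2 + p * (a^2+c^2)^2) / c^2 * (1/c)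
      + (2*n : ℕ) * (2 * (1 + n - 1/c))
      + (2*p : ℕ) * (2 * (1 + p - (a^2+c^2)/c)) := by
  rw [← Finset.sum_range_add_sum_Ico _ (show 2*n+2 ≤ 2*n+2*p+2 by omega)]
  rw [Finset.sum_range_succ, Finset.sum_range_succ']
  have h1 : ∀ i ∈ Finset.range (2*n), rdN n p a c (i+1) * gdN n a c (i+1)
      = 2 * (1 + n - 1/c) := by
    intro i hi
    simp only [Finset.mem_range] at hi
    simp only [rdN, gdN]
    rw [if_neg (by omega), if_neg (by omega), if_pos (by omega),
      if_neg (by omega), if_neg (by omega)]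
    ring
  have h2 : ∀ i ∈ Finset.Ico (2*n+2) (2*n+2*p+2), rdN n p a c i * gdN n a c i
      = 2 * (1 + p - (a^2+c^2)/c) := by
    intro i hi
    simp only [Finset.mem_Ico] at hi
    simp only [rdN, gdN]
    rw [if_neg (by omega), if_neg (by omega), if_neg (by omega),
      if_neg (by omega), if_neg (by omega)]
    ring
  rw [Finset.sum_congr rfl h1, Finset.sum_congr rfl h2, Finset.sum_const, Finset.sum_const]
  simp only [rdN, gdN, Finset.card_range, Nat.card_Ico]
  rw [show 2*n+2*p+2 - (2*n+2) = 2*p from by omega]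
  split_ifs <;> first | contradiction | omega | (push_cast; ring)

theorem stmt_7' (hc : 0 < c) :
    (ricMat n p a c * (gMat n p a c)⁻¹).trace =
      4 * n * (1 + n - 1/(2*c)) + 4 * p * (1 + p - (a^2+c^2)/(2*c)) := by
  rw [Matrix.inv_eq_right_inv (mul_gInv n p a c hc.ne')]
  rw [Matrix.trace]
  have expand : ∀ i : Fin (2*n+2*p+2),
      (ricMat n p a c * gInvMat n p a c).diag i
        = rdN n p a c (i : ℕ) * gdN n a c (i : ℕ)
          + (if i = zIdx n p then (-2 * a * (n + p * (a^2+c^2)) / c^2) * (a/c) else 0)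
          + (if i = mIdx n p then (-2 * a * (n + p * (a^2+c^2)) / c^2) * (a/c) else 0) := by
    intro i
    rw [Matrix.diag_apply, Matrix.mul_apply]
    simp only [ric_decomp, add_mul, ite_mul, zero_mul, Finset.sum_add_distrib,
      Finset.sum_ite_irrel, Finset.sum_ite_eq, Finset.sum_ite_eq', Finset.mem_univ, if_true,
      Finset.sum_const_zero, gInv_diag, gInv_mz, gInv_zm, coe_eq_zero, coe_eq_m]
    split_ifs with h1 h2 <;>
      first
        | rfl
        | (simp only [zIdx, mIdx, Fin.ext_iff] at h1 h2; omega)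
        | (rw [h1, gInv_mz])
        | (rw [h2, gInv_zm])
        | (rename_i h3; rw [h3, gInv_zm])
  rw [Finset.sum_congr rfl fun i _ => expand i]
  rw [Finset.sum_add_distrib, Finset.sum_add_distrib, Finset.sum_ite_eq', Finset.sum_ite_eq']
  rw [Fin.sum_univ_eq_sum_range (fun t => rdN n p a c t * gdN n a c t), sum_diag]
  simp only [Finset.mem_univ, if_true]
  have hc' : c ≠ 0 := hc.ne'
  push_cast
  field_simp
  ring

end


theorem stmt_7 (n p : ℕ) (a c : ℝ) (hc : 0 < c) :
    (ricMat n p a c * (gMat n p a c)⁻¹).trace =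
      4 * n * (1 + n - 1/(2*c)) + 4 * p * (1 + p - (a^2+c^2)/(2*c)) := by
  exact stmt_7' n p a c hc
end

section
/- For c ≥ 1 and real a, the minimum over the listed values min(a/c, -a/c, 0, (a²+c²)/c, 1/c, (5c-3(a²+c²)+√D)/(2c), (5c-3(a²+c²)-√D)/(2c), 4-3(a²+c²)/c, 1) equals min(-|a|/c, (5c-3(a²+c²)-√D)/(2c)), where D = 16a² + 9c² - 18c(a²+c²) + 9(a²+c²)². -/
/-!
Write `s = a² + c²`. Since `D = (3s - 3c)² + 16a²`, we have `|3s - 3c| ≤ √D`, and the three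
candidates `1`, `4 - 3s/c` and `(5c - 3s + √D)/(2c)` are all of the form `(5c - 3s + u)/(2c)`
with `|u| ≤ √D` (namely `u = 3s - 3c`, `3c - 3s`, `√D`), so none is below
`(5c - 3s - √D)/(2c)`. The remaining candidates `±a/c`, `0`, `s/c`, `1/c` are `x/c` with
`-|a| ≤ x`, so none is below `-|a|/c`, which itself is one of `±a/c`.
-/

lemma div_sub_le_div_add {u r k : ℝ} (v : ℝ) (hu : |u| ≤ r) (hk : 0 < k) :
    (v - r) / k ≤ (v + u) / k :=
  div_le_div_of_nonneg_right (by linarith [neg_abs_le u]) hk.le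

lemma abs_sub_le_sqrt_discr (a c : ℝ) :
    |3*(a^2+c^2) - 3*c| ≤ Real.sqrt (16*a^2 + 9*c^2 - 18*c*(a^2+c^2) + 9*(a^2+c^2)^2) :=
  Real.abs_le_sqrt (by nlinarith [sq_nonneg a])

theorem stmt_13 (a c : ℝ) (hc : 1 ≤ c)
    (D : ℝ) (hD : D = 16*a^2 + 9*c^2 - 18*c*(a^2+c^2) + 9*(a^2+c^2)^2) :
    min (a/c) (min (-a/c) (min 0 (min ((a^2+c^2)/c) (min (1/c)
      (min ((5*c - 3*(a^2+c^2) + Real.sqrt D)/(2*c))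
        (min ((5*c - 3*(a^2+c^2) - Real.sqrt D)/(2*c))
          (min (4 - 3*(a^2+c^2)/c) 1)))))))
    = min (-|a|/c) ((5*c - 3*(a^2+c^2) - Real.sqrt D)/(2*c)) := by
  have hc0 : 0 < c := by linarith
  have h2c : 0 < 2*c := by linarith
  have hr : |3*(a^2+c^2) - 3*c| ≤ Real.sqrt D := hD ▸ abs_sub_le_sqrt_discr a c
  have h_one := div_sub_le_div_add (5*c - 3*(a^2+c^2)) hr h2c
  have h_four := div_sub_le_div_add (5*c - 3*(a^2+c^2)) ((abs_neg _).le.trans hr) h2c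
  have h_plus := div_sub_le_div_add (5*c - 3*(a^2+c^2))
    (abs_of_nonneg (Real.sqrt_nonneg D)).le h2c
  have hx (x : ℝ) (hx : -|a| ≤ x) : -|a|/c ≤ x/c := div_le_div_of_nonneg_right hx hc0.le
  have hna : -|a| ≤ 0 := neg_nonpos.mpr (abs_nonneg a)
  rw [show (5*c - 3*(a^2+c^2) + (3*(a^2+c^2) - 3*c)) / (2*c) = 1 by field_simp; ring] at h_one
  rw [show (5*c - 3*(a^2+c^2) + -(3*(a^2+c^2) - 3*c)) / (2*c) = 4 - 3*(a^2+c^2)/c by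
    field_simp; ring] at h_four
  apply le_antisymm
  · refine le_min ?_ (by simp only [min_le_iff, le_refl, true_or, or_true])
    rcases abs_choice a with h | h <;> simp only [h, neg_neg, min_le_iff, le_refl, true_or, or_true]
  · simp only [le_min_iff, min_le_iff]
    refine ⟨Or.inl (hx a (neg_abs_le a)), Or.inl (hx (-a) (neg_le_neg (le_abs_self a))),
      Or.inl ((hx 0 hna).trans_eq (zero_div c)), Or.inl (hx _ (hna.trans (by positivity))),
      Or.inl (hx 1 (hna.trans zero_le_one)), Or.inr h_plus, Or.inr le_rfl, Or.inr h_four,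
      Or.inr h_one⟩
end
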